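/- Let f(n, k) denote the number of words in [k]^n avoiding the generalized pattern 11-2. Then for every integer k ≥ 0, the identity (∑_{n ≥ 0} f(n, k)·x^n) · ∏_{j=0}^{k-1} (1 - j·x - x²) = ∏_{j=0}^{k-1} (1 - (j - 1)·x) holds as an identity of formal power series over ℚ. -/

import Mathlib

open PowerSeries

/-- The `i`-th letter (1-based value in `{1,…,k}`) of a word `w ∈ [k]^n`,
with value `0` outside the word. -/
def letter {n k : ℕ} (w : Fin n → Fin k) (i : ℕ) : ℕ :=
  if h : i < n then (w ⟨i, h⟩ : ℕ) + 1 else 0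

/-- `w` avoids the generalized pattern 11-2: there are no 0-based indices
`i, j` with `i + 2 ≤ j < n` such that `w i = w (i+1)` and `w j > w i`. -/
def Avoids11d2 {n k : ℕ} (w : Fin n → Fin k) : Prop :=
  ∀ i j : ℕ, i + 2 ≤ j → j < n →
    ¬ (letter w i = letter w (i + 1) ∧ letter w i < letter w j)

/-- The number of words in `[k]^n` avoiding 11-2. -/
noncomputable def f (n k : ℕ) : ℕ := Nat.card {w : Fin n → Fin k // Avoids11d2 w}

/-! Removing the first letter shows that the word `b v` avoids 11-2 iff `v` does and, in case `b`
equals the first letter of `v`, no letter of `v` exceeds `b`. So an avoiding word of length `n + 1`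
has `k - 1` admissible new first letters, or `k` if its first letter is its maximum; those last
words with first letter `a` are `a` followed by an avoiding word over `[a + 1]`. Hence
`f (n+2) k = (k - 1) f (n+1) k + ∑_{a<k} f n (a+1)`, that is,
`F_k (1 - (k-1)x) = 1 + x + x² ∑_{a<k} F_{a+1}` for `F_k = ∑ f n k xⁿ`. Subtracting the case `k`
from the case `k + 1` gives `F_{k+1} (1 - kx - x²) = F_k (1 - (k-1)x)`, and the product formula
follows by induction from `F_0 = 1`. -/

open Finset

theorem letter_coe {n k : ℕ} (w : Fin n → Fin k) (i : Fin n) : letter w i = w i + 1 :=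
  dif_pos i.isLt

theorem letter_cons_zero {m k : ℕ} (b : Fin k) (v : Fin m → Fin k) :
    letter (Fin.cons b v : Fin (m + 1) → Fin k) 0 = b + 1 :=
  letter_coe _ 0

theorem letter_cons_succ {m k : ℕ} (b : Fin k) (v : Fin m → Fin k) (i : ℕ) :
    letter (Fin.cons b v : Fin (m + 1) → Fin k) (i + 1) = letter v i := by
  by_cases h : i < m
  · exact (letter_coe _ (Fin.succ ⟨i, h⟩)).trans (letter_coe v ⟨i, h⟩).symm
  · simp [letter, h]

theorem letter_castLE_comp {n k k' : ℕ} (h : k ≤ k') (u : Fin n → Fin k) (i : ℕ) :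
    letter (Fin.castLE h ∘ u) i = letter u i := by
  unfold letter
  split <;> rfl

theorem avoids11d2_castLE_comp_iff {n k k' : ℕ} (h : k ≤ k') (u : Fin n → Fin k) :
    Avoids11d2 (Fin.castLE h ∘ u) ↔ Avoids11d2 u := by
  simp only [Avoids11d2, letter_castLE_comp]

theorem avoids11d2_cons_iff {m k : ℕ} (b : Fin k) (v : Fin m → Fin k) :
    Avoids11d2 (Fin.cons b v : Fin (m + 1) → Fin k) ↔
      Avoids11d2 v ∧ (letter v 0 = b + 1 → ∀ j, v j ≤ b) := by
  constructor
  · intro h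
    refine ⟨fun i j hij hj => ?_, fun h0 j => ?_⟩
    · simpa only [letter_cons_succ] using h (i + 1) (j + 1) (by omega) (by omega)
    · rw [Fin.le_def]
      by_contra hlt
      rcases Nat.eq_zero_or_pos j with hj0 | hjpos
      · have := letter_coe v j
        rw [hj0] at this
        omega
      · have := h 0 (j + 1) (by omega) (by omega)
        rw [letter_cons_zero, letter_cons_succ, letter_cons_succ, letter_coe] at this
        exact this ⟨h0.symm, by omega⟩
  · rintro ⟨hv, hhead⟩ i j hij hj ⟨heq, hlt⟩
    obtain ⟨j, rfl⟩ : ∃ j', j = j' + 1 := ⟨j - 1, by omega⟩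
    rcases i with _ | i
    · rw [letter_cons_zero, letter_cons_succ] at heq hlt
      rw [show j = ((⟨j, by omega⟩ : Fin m) : ℕ) from rfl, letter_coe] at hlt
      have := Fin.le_def.mp (hhead heq.symm ⟨j, by omega⟩)
      omega
    · rw [letter_cons_succ, letter_cons_succ] at heq hlt
      exact hv i j (by omega) (by omega) ⟨heq, hlt⟩

def HeadIsMax {n k : ℕ} (v : Fin (n + 1) → Fin k) : Prop := ∀ j, v j ≤ v 0

theorem avoids11d2_cons_iff_headIsMax {n k : ℕ} (b : Fin k) (v : Fin (n + 1) → Fin k) :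
    Avoids11d2 (Fin.cons b v : Fin (n + 2) → Fin k) ↔
      Avoids11d2 v ∧ (v 0 = b → HeadIsMax v) := by
  rw [avoids11d2_cons_iff, show letter v 0 = v 0 + 1 from letter_coe v 0, add_left_inj, Fin.val_inj]
  refine and_congr_right fun _ => imp_congr_right fun h => ?_
  rw [HeadIsMax, h]

theorem avoids11d2_cons_iff_of_le {m k : ℕ} {b : Fin k} {v : Fin m → Fin k}
    (h : ∀ j, v j ≤ b) : Avoids11d2 (Fin.cons b v : Fin (m + 1) → Fin k) ↔ Avoids11d2 v := by
  simp [avoids11d2_cons_iff, h]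

theorem headIsMax_cons_iff {n k : ℕ} (b : Fin k) (v : Fin n → Fin k) :
    HeadIsMax (Fin.cons b v : Fin (n + 1) → Fin k) ↔ ∀ j, v j ≤ b := by
  simp [HeadIsMax, Fin.forall_fin_succ]

def avoidersConsEquiv (n k : ℕ) :
    {w : Fin (n + 2) → Fin k // Avoids11d2 w} ≃
      Σ v : {v : Fin (n + 1) → Fin k // Avoids11d2 v},
        {b : Fin k // v.1 0 = b → HeadIsMax v.1} where
  toFun w :=
    have h := (avoids11d2_cons_iff_headIsMax (w.1 0) (Fin.tail w.1)).1
      (by rw [Fin.cons_self_tail]; exact w.2)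
    ⟨⟨Fin.tail w.1, h.1⟩, ⟨w.1 0, h.2⟩⟩
  invFun p := ⟨Fin.cons p.2.1 p.1.1, (avoids11d2_cons_iff_headIsMax _ _).2 ⟨p.1.2, p.2.2⟩⟩
  left_inv w := Subtype.ext (Fin.cons_self_tail w.1)
  right_inv _ := rfl

def avoidersHeadIsMaxEquiv (n k : ℕ) :
    {v : {v : Fin (n + 1) → Fin k // Avoids11d2 v} // HeadIsMax v.1} ≃
      Σ a : Fin k, {u : Fin n → Fin (a + 1) // Avoids11d2 u} where
  toFun v :=
    ⟨v.1.1 0, fun j => ⟨v.1.1 j.succ, Nat.lt_succ_of_le (v.2 j.succ)⟩,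
      (avoids11d2_castLE_comp_iff (v.1.1 0).isLt _).1 <|
        (avoids11d2_cons_iff_of_le (v := Fin.tail v.1.1) fun j => v.2 j.succ).1 <|
          (Fin.cons_self_tail v.1.1).symm ▸ v.1.2⟩
  invFun p :=
    have hle : ∀ j, Fin.castLE p.1.isLt (p.2.1 j) ≤ p.1 := fun j =>
      Nat.lt_succ_iff.mp (p.2.1 j).isLt
    ⟨⟨Fin.cons p.1 (Fin.castLE p.1.isLt ∘ p.2.1),
      (avoids11d2_cons_iff_of_le hle).2 ((avoids11d2_castLE_comp_iff _ _).2 p.2.2)⟩,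
      (headIsMax_cons_iff _ _).2 hle⟩
  left_inv v := Subtype.ext <| Subtype.ext <| Fin.cons_self_tail v.1.1
  right_inv _ := rfl

theorem natCard_imp_add_one {α : Type*} [Fintype α] (a : α) (P : Prop) [Decidable P] :
    Nat.card {b : α // a = b → P} + 1 = Nat.card α + if P then 1 else 0 := by
  by_cases hP : P
  · simp [hP]
  · classical
    have hpos : 0 < Fintype.card α := Fintype.card_pos_iff.2 ⟨a⟩
    simp only [hP, imp_false, if_false, Nat.card_eq_fintype_card, Fintype.card_subtype_compl,
      Fintype.card_subtype_eq']
    omega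

theorem f_add_two_add (n k : ℕ) :
    f (n + 2) k + f (n + 1) k = k * f (n + 1) k + ∑ a ∈ range k, f n (a + 1) := by
  classical
  have hhead : Nat.card {v : {v : Fin (n + 1) → Fin k // Avoids11d2 v} // HeadIsMax v.1} =
      ∑ a ∈ range k, f n (a + 1) := by
    rw [Nat.card_congr (avoidersHeadIsMaxEquiv n k), Nat.card_sigma,
      ← Fin.sum_univ_eq_sum_range (fun a => f n (a + 1))]
    rfl
  rw [← hhead, f, f, Nat.card_congr (avoidersConsEquiv n k), Nat.card_sigma,
    Nat.card_eq_fintype_card (α := {v // HeadIsMax _}), Fintype.card_subtype,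
    Nat.card_eq_fintype_card, Fintype.card_eq_sum_ones, ← sum_add_distrib]
  simp only [natCard_imp_add_one, sum_add_distrib, sum_boole]
  simp [mul_comm]

theorem avoids11d2_of_le_one {n k : ℕ} (hn : n ≤ 1) (w : Fin n → Fin k) : Avoids11d2 w :=
  fun _ _ hij hj => by omega

theorem f_of_le_one {n : ℕ} (hn : n ≤ 1) (k : ℕ) : f n k = k ^ n := by
  rw [f, Nat.card_congr (Equiv.subtypeUnivEquiv (avoids11d2_of_le_one hn)), Nat.card_fun]
  simp

theorem f_succ_zero (n : ℕ) : f (n + 1) 0 = 0 := by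
  simp [f]

noncomputable def genFun (k : ℕ) : ℚ⟦X⟧ := mk fun n => (f n k : ℚ)

theorem genFun_zero : genFun 0 = 1 := by
  ext (_ | n) <;> simp [genFun, f_of_le_one, f_succ_zero, coeff_one]

theorem genFun_mul (k : ℕ) :
    genFun k * (1 - C ((k : ℚ) - 1) * X) = 1 + X + X ^ 2 * ∑ a ∈ range k, genFun (a + 1) := by
  have hlhs : genFun k * (1 - C ((k : ℚ) - 1) * X) = genFun k - ((k : ℚ) - 1) • (genFun k * X) := by
    rw [smul_eq_C_mul]
    ring
  have hrhs : X ^ 2 * ∑ a ∈ range k, genFun (a + 1) = (∑ a ∈ range k, genFun (a + 1)) * X * X := by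
    ring
  rw [hlhs, hrhs]
  ext (_ | _ | n) <;>
    simp only [map_sub, map_add, coeff_smul, coeff_succ_mul_X, coeff_zero_mul_X, genFun,
      coeff_mk, coeff_one, coeff_X, map_sum]
  · simp [f_of_le_one]
  · simp [f_of_le_one]
  · have h := congrArg (Nat.cast : ℕ → ℚ) (f_add_two_add n k)
    push_cast at h
    simp only [smul_eq_mul, Nat.add_eq_zero_iff, one_ne_zero, and_false, if_false,
      Nat.add_eq_right, zero_add]
    linear_combination h

theorem genFun_succ_mul (k : ℕ) :
    genFun (k + 1) * (1 - C (k : ℚ) * X - X ^ 2) = genFun k * (1 - C ((k : ℚ) - 1) * X) := by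
  have h0 := genFun_mul k
  have h1 := genFun_mul (k + 1)
  rw [sum_range_succ, Nat.cast_succ, add_sub_cancel_right] at h1
  linear_combination h1 - h0

theorem stmt6 (k : ℕ) :
    (PowerSeries.mk fun n => (f n k : ℚ)) *
        ∏ j ∈ Finset.range k, (1 - C (j : ℚ) * X - X ^ 2) =
      ∏ j ∈ Finset.range k, (1 - C ((j : ℚ) - 1) * X) := by
  change genFun k * _ = _
  induction k with
  | zero => simp [genFun_zero]
  | succ k ih =>
    rw [prod_range_succ, prod_range_succ, ← ih]
    linear_combination (∏ j ∈ range k, (1 - C (j : ℚ) * X - X ^ 2)) * genFun_succ_mul k
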